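/- Let Ω̂ ⊆ ℝⁿ be an open set and let A : ℝⁿ → ℝⁿ be injective on Ω̂ and differentiable at every ξ ∈ Ω̂ with invertible derivative A'(ξ), and suppose there are constants 0 < c ≤ C, M₁ > 0, M₂ > 0 such that for all ξ ∈ Ω̂: c ≤ |det A'(ξ)| ≤ C, ‖A'(ξ)‖ ≤ M₁ (operator norm), and ‖(A'(ξ))⁻¹‖ ≤ M₂. Then for every u : ℝⁿ → ℝ differentiable on A(Ω̂), with û := u ∘ A, (c / M₁²) · ∫_{Ω̂} ‖∇û(ξ)‖² dξ ≤ ∫_{A(Ω̂)} ‖∇u(x)‖² dx ≤ C · M₂² · ∫_{Ω̂} ‖∇û(ξ)‖² dξ; i.e., the H¹ seminorms on the evolving domain and the reference domain are equivalent with constants depending only on the stated bounds. -/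

import Mathlib

/-!
By the chain rule `D(u ∘ A)(ξ) = Du(A ξ) ∘ A'(ξ)`, so the operator-norm bounds on `A'(ξ)` and its
inverse compare `‖∇(u ∘ A)(ξ)‖` with `‖∇u(A ξ)‖` in both directions. The change of variables
formula turns `∫_{A(Ω̂)} ‖∇u‖²` into `∫_{Ω̂} |det A'| ‖∇u ∘ A‖²`, and the determinant bounds then
give the two inequalities pointwise on `Ω̂`. They integrate even without any integrability
assumption: the pointwise bounds make the two integrands integrable or not together, and in the
second case both Bochner integrals are `0`.
-/

open MeasureTheory

section IntegralComparison

variable {α : Type*} [MeasurableSpace α] {μ : Measure α} {f g : α → ℝ}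

theorem integral_le_mul_integral_of_ae_le_mul {b b' : ℝ} (hf : AEStronglyMeasurable f μ)
    (hf0 : 0 ≤ᵐ[μ] f) (hg0 : 0 ≤ᵐ[μ] g) (hgf : ∀ᵐ x ∂μ, g x ≤ b * f x)
    (hfg : ∀ᵐ x ∂μ, f x ≤ b' * g x) :
    ∫ x, g x ∂μ ≤ b * ∫ x, f x ∂μ := by
  by_cases hfi : Integrable f μ
  · rw [← integral_const_mul]
    exact integral_mono_of_nonneg hg0 (hfi.const_mul b) hgf
  · have hgi : ¬ Integrable g μ := fun hgi => hfi <| (hgi.const_mul b').mono' hf <| by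
      filter_upwards [hf0, hfg] with x hfx hfgx
      rwa [Real.norm_of_nonneg hfx]
    rw [integral_undef hfi, integral_undef hgi, mul_zero]

theorem integral_bounds_of_ae_bounds {a b : ℝ} (hf : AEStronglyMeasurable f μ)
    (hg : AEStronglyMeasurable g μ) (hf0 : 0 ≤ᵐ[μ] f) (ha : 0 < a)
    (hfg : ∀ᵐ x ∂μ, a * f x ≤ g x ∧ g x ≤ b * f x) :
    a * ∫ x, f x ∂μ ≤ ∫ x, g x ∂μ ∧ ∫ x, g x ∂μ ≤ b * ∫ x, f x ∂μ := by
  have hg0 : 0 ≤ᵐ[μ] g := by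
    filter_upwards [hf0, hfg] with x hfx hfgx
    exact (mul_nonneg ha.le hfx).trans hfgx.1
  have hf_le : ∀ᵐ x ∂μ, f x ≤ a⁻¹ * g x := by
    filter_upwards [hfg] with x hx
    rw [le_inv_mul_iff₀ ha]
    exact hx.1
  have hg_le : ∀ᵐ x ∂μ, g x ≤ b * f x := hfg.mono fun _ hx => hx.2
  rw [← le_inv_mul_iff₀ ha]
  exact ⟨integral_le_mul_integral_of_ae_le_mul hg hg0 hf0 hf_le hg_le,
    integral_le_mul_integral_of_ae_le_mul hf hf0 hg0 hg_le hf_le⟩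

end IntegralComparison

section Gradient

variable {𝕜 F : Type*} [RCLike 𝕜] [NormedAddCommGroup F] [InnerProductSpace 𝕜 F]
  [CompleteSpace F]

theorem norm_gradient_eq_norm_fderiv (f : F → 𝕜) (x : F) : ‖gradient f x‖ = ‖fderiv 𝕜 f x‖ := by
  rw [← toDual_gradient, LinearIsometryEquiv.norm_map]

theorem measurable_norm_gradient [MeasurableSpace F] [OpensMeasurableSpace F]
    [SecondCountableTopology F] (f : F → 𝕜) : Measurable fun x => ‖gradient f x‖ := by
  simpa only [norm_gradient_eq_norm_fderiv] using (measurable_fderiv 𝕜 f).norm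

end Gradient

theorem ContinuousLinearMap.norm_le_norm_comp_mul_norm_symm {𝕜 E F G : Type*}
    [NontriviallyNormedField 𝕜] [NormedAddCommGroup E] [NormedSpace 𝕜 E]
    [NormedAddCommGroup F] [NormedSpace 𝕜 F] [NormedAddCommGroup G] [NormedSpace 𝕜 G]
    (ℓ : F →L[𝕜] G) (L : E ≃L[𝕜] F) :
    ‖ℓ‖ ≤ ‖ℓ.comp (L : E →L[𝕜] F)‖ * ‖(L.symm : F →L[𝕜] E)‖ := by
  calc ‖ℓ‖ = ‖(ℓ.comp (L : E →L[𝕜] F)).comp (L.symm : F →L[𝕜] E)‖ := by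
        rw [comp_assoc, L.coe_comp_coe_symm, comp_id]
    _ ≤ _ := opNorm_comp_le _ _

theorem norm_comp_sq_bounds {𝕜 E F G : Type*} [NontriviallyNormedField 𝕜]
    [NormedAddCommGroup E] [NormedSpace 𝕜 E] [NormedAddCommGroup F] [NormedSpace 𝕜 F]
    [NormedAddCommGroup G] [NormedSpace 𝕜 G] (ℓ : F →L[𝕜] G) (L : E ≃L[𝕜] F)
    {c d C M₁ M₂ : ℝ} (hc : 0 ≤ c) (hM₁ : 0 < M₁) (hcd : c ≤ d) (hdC : d ≤ C)
    (hL : ‖(L : E →L[𝕜] F)‖ ≤ M₁) (hLsymm : ‖(L.symm : F →L[𝕜] E)‖ ≤ M₂) :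
    c / M₁ ^ 2 * ‖ℓ.comp (L : E →L[𝕜] F)‖ ^ 2 ≤ d * ‖ℓ‖ ^ 2 ∧
      d * ‖ℓ‖ ^ 2 ≤ C * M₂ ^ 2 * ‖ℓ.comp (L : E →L[𝕜] F)‖ ^ 2 := by
  have hcomp : ‖ℓ.comp (L : E →L[𝕜] F)‖ ≤ ‖ℓ‖ * M₁ :=
    (ℓ.opNorm_comp_le _).trans (by gcongr)
  have hsymm : ‖ℓ‖ ≤ ‖ℓ.comp (L : E →L[𝕜] F)‖ * M₂ :=
    (ℓ.norm_le_norm_comp_mul_norm_symm L).trans (by gcongr)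
  have hd : 0 ≤ d := hc.trans hcd
  constructor
  · calc c / M₁ ^ 2 * ‖ℓ.comp (L : E →L[𝕜] F)‖ ^ 2 ≤ c / M₁ ^ 2 * (‖ℓ‖ * M₁) ^ 2 := by
          gcongr
      _ = c * ‖ℓ‖ ^ 2 := by field_simp
      _ ≤ d * ‖ℓ‖ ^ 2 := by gcongr
  · calc d * ‖ℓ‖ ^ 2 ≤ d * (‖ℓ.comp (L : E →L[𝕜] F)‖ * M₂) ^ 2 := by gcongr
      _ ≤ C * (‖ℓ.comp (L : E →L[𝕜] F)‖ * M₂) ^ 2 := by gcongr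
      _ = C * M₂ ^ 2 * ‖ℓ.comp (L : E →L[𝕜] F)‖ ^ 2 := by ring

theorem norm_gradient_comp_sq_bounds {E : Type*} [NormedAddCommGroup E] [InnerProductSpace ℝ E]
    [CompleteSpace E] {u : E → ℝ} {A : E → E} {L : E ≃L[ℝ] E} {ξ : E}
    (hu : DifferentiableAt ℝ u (A ξ)) (hA : HasFDerivAt A (L : E →L[ℝ] E) ξ)
    {c C M₁ M₂ : ℝ} (hc : 0 ≤ c) (hM₁ : 0 < M₁)
    (hdet : c ≤ |(L : E →L[ℝ] E).det| ∧ |(L : E →L[ℝ] E).det| ≤ C)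
    (hL : ‖(L : E →L[ℝ] E)‖ ≤ M₁) (hLsymm : ‖(L.symm : E →L[ℝ] E)‖ ≤ M₂) :
    c / M₁ ^ 2 * ‖gradient (u ∘ A) ξ‖ ^ 2 ≤ |(L : E →L[ℝ] E).det| * ‖gradient u (A ξ)‖ ^ 2 ∧
      |(L : E →L[ℝ] E).det| * ‖gradient u (A ξ)‖ ^ 2 ≤
        C * M₂ ^ 2 * ‖gradient (u ∘ A) ξ‖ ^ 2 := by
  rw [norm_gradient_eq_norm_fderiv, norm_gradient_eq_norm_fderiv,
    (hu.hasFDerivAt.comp ξ hA).fderiv]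
  exact norm_comp_sq_bounds _ L hc hM₁ hdet.1 hdet.2 hL hLsymm

theorem h1_seminorm_equivalence_reference_evolving_general {n : ℕ}
    (Ωhat : Set (EuclideanSpace ℝ (Fin n))) (hΩ : IsOpen Ωhat)
    (A : EuclideanSpace ℝ (Fin n) → EuclideanSpace ℝ (Fin n))
    (A' : EuclideanSpace ℝ (Fin n) →
      (EuclideanSpace ℝ (Fin n) ≃L[ℝ] EuclideanSpace ℝ (Fin n)))
    (hA : ∀ ξ ∈ Ωhat,
      HasFDerivAt A (A' ξ : EuclideanSpace ℝ (Fin n) →L[ℝ] EuclideanSpace ℝ (Fin n)) ξ)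
    (hinj : Set.InjOn A Ωhat)
    (c C M₁ M₂ : ℝ) (hc : 0 < c) (hM₁ : 0 < M₁)
    (hdet : ∀ ξ ∈ Ωhat,
      c ≤ |((A' ξ : EuclideanSpace ℝ (Fin n) →L[ℝ] EuclideanSpace ℝ (Fin n))).det| ∧
        |((A' ξ : EuclideanSpace ℝ (Fin n) →L[ℝ] EuclideanSpace ℝ (Fin n))).det| ≤ C)
    (hop : ∀ ξ ∈ Ωhat,
      ‖(A' ξ : EuclideanSpace ℝ (Fin n) →L[ℝ] EuclideanSpace ℝ (Fin n))‖ ≤ M₁)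
    (hopinv : ∀ ξ ∈ Ωhat,
      ‖((A' ξ).symm : EuclideanSpace ℝ (Fin n) →L[ℝ] EuclideanSpace ℝ (Fin n))‖ ≤ M₂)
    (u : EuclideanSpace ℝ (Fin n) → ℝ)
    (hu : ∀ x ∈ A '' Ωhat, DifferentiableAt ℝ u x) :
    (c / M₁ ^ 2) * ∫ ξ in Ωhat, ‖gradient (u ∘ A) ξ‖ ^ 2 ≤
        ∫ x in A '' Ωhat, ‖gradient u x‖ ^ 2 ∧
      ∫ x in A '' Ωhat, ‖gradient u x‖ ^ 2 ≤
        C * M₂ ^ 2 * ∫ ξ in Ωhat, ‖gradient (u ∘ A) ξ‖ ^ 2 := by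
  have hΩm := hΩ.measurableSet
  -- `fderiv ℝ A` agrees with `A'` on `Ωhat` and, unlike `A'`, is known to be measurable.
  have hAΩ : ∀ ξ ∈ Ωhat, HasFDerivWithinAt A (fderiv ℝ A ξ) Ωhat ξ := fun ξ hξ =>
    (hA ξ hξ).differentiableAt.hasFDerivAt.hasFDerivWithinAt
  rw [integral_image_eq_integral_abs_det_fderiv_smul volume hΩm hAΩ hinj]
  have hbounds : ∀ᵐ ξ ∂volume.restrict Ωhat,
      c / M₁ ^ 2 * ‖gradient (u ∘ A) ξ‖ ^ 2 ≤ |(fderiv ℝ A ξ).det| • ‖gradient u (A ξ)‖ ^ 2 ∧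
        |(fderiv ℝ A ξ).det| • ‖gradient u (A ξ)‖ ^ 2 ≤
          C * M₂ ^ 2 * ‖gradient (u ∘ A) ξ‖ ^ 2 := by
    refine ae_restrict_of_forall_mem hΩm fun ξ hξ => ?_
    rw [(hA ξ hξ).fderiv, smul_eq_mul]
    exact norm_gradient_comp_sq_bounds (hu _ ⟨ξ, hξ, rfl⟩) (hA ξ hξ) hc.le hM₁ (hdet ξ hξ)
      (hop ξ hξ) (hopinv ξ hξ)
  have hmeas : AEStronglyMeasurable
      (fun ξ => |(fderiv ℝ A ξ).det| • ‖gradient u (A ξ)‖ ^ 2) (volume.restrict Ωhat) := by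
    have hAm : AEMeasurable A (volume.restrict Ωhat) :=
      ContinuousOn.aemeasurable (fun ξ hξ => (hAΩ ξ hξ).continuousWithinAt) hΩm
    have hdetm : Measurable fun ξ => |(fderiv ℝ A ξ).det| :=
      (ContinuousLinearMap.continuous_det.measurable.comp (measurable_fderiv ℝ A)).abs
    exact (hdetm.aemeasurable.smul
      (((measurable_norm_gradient u).pow_const 2).comp_aemeasurable hAm)).aestronglyMeasurable
  have hnonneg : 0 ≤ᵐ[volume.restrict Ωhat] fun ξ => ‖gradient (u ∘ A) ξ‖ ^ 2 :=
    ae_of_all _ fun ξ => sq_nonneg _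
  exact integral_bounds_of_ae_bounds
    ((measurable_norm_gradient _).pow_const 2).aestronglyMeasurable hmeas hnonneg
    (by positivity) hbounds

/-- Equivalence of the H¹ seminorms between the evolving domain `A '' Ω̂` and the reference
domain `Ω̂`, with constants depending only on the bounds `c ≤ |det A'| ≤ C`,
`‖A'‖ ≤ M₁` and `‖(A')⁻¹‖ ≤ M₂`. -/
theorem h1_seminorm_equivalence_reference_evolving {n : ℕ}
    (Ωhat : Set (EuclideanSpace ℝ (Fin n))) (hΩ : IsOpen Ωhat)
    (A : EuclideanSpace ℝ (Fin n) → EuclideanSpace ℝ (Fin n))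
    (A' : EuclideanSpace ℝ (Fin n) →
      (EuclideanSpace ℝ (Fin n) ≃L[ℝ] EuclideanSpace ℝ (Fin n)))
    (hA : ∀ ξ ∈ Ωhat,
      HasFDerivAt A (A' ξ : EuclideanSpace ℝ (Fin n) →L[ℝ] EuclideanSpace ℝ (Fin n)) ξ)
    (hinj : Set.InjOn A Ωhat)
    (c C M₁ M₂ : ℝ) (hc : 0 < c) (hcC : c ≤ C) (hM₁ : 0 < M₁) (hM₂ : 0 < M₂)
    (hdet : ∀ ξ ∈ Ωhat,
      c ≤ |((A' ξ : EuclideanSpace ℝ (Fin n) →L[ℝ] EuclideanSpace ℝ (Fin n))).det| ∧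
        |((A' ξ : EuclideanSpace ℝ (Fin n) →L[ℝ] EuclideanSpace ℝ (Fin n))).det| ≤ C)
    (hop : ∀ ξ ∈ Ωhat,
      ‖(A' ξ : EuclideanSpace ℝ (Fin n) →L[ℝ] EuclideanSpace ℝ (Fin n))‖ ≤ M₁)
    (hopinv : ∀ ξ ∈ Ωhat,
      ‖((A' ξ).symm : EuclideanSpace ℝ (Fin n) →L[ℝ] EuclideanSpace ℝ (Fin n))‖ ≤ M₂)
    (u : EuclideanSpace ℝ (Fin n) → ℝ)
    (hu : ∀ x ∈ A '' Ωhat, DifferentiableAt ℝ u x) :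
    (c / M₁ ^ 2) * ∫ ξ in Ωhat, ‖gradient (u ∘ A) ξ‖ ^ 2 ≤
        ∫ x in A '' Ωhat, ‖gradient u x‖ ^ 2 ∧
      ∫ x in A '' Ωhat, ‖gradient u x‖ ^ 2 ≤
        C * M₂ ^ 2 * ∫ ξ in Ωhat, ‖gradient (u ∘ A) ξ‖ ^ 2 :=
  h1_seminorm_equivalence_reference_evolving_general Ωhat hΩ A A' hA hinj c C M₁ M₂ hc hM₁ hdet hop
    hopinv u hu
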